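/- Let (Ω, ℱ, P) be a probability space and let U : (0,∞) → ℝ be continuously differentiable, strictly increasing and strictly concave, with U'(0+) = +∞, U'(∞) = 0 and limsup_{x→∞} x U'(x)/U(x) < 1; extend U to 0 by U(0) = lim_{x↓0} U(x) ∈ [−∞, ∞). Let D be a convex set of nonnegative random variables such that E[U(W)] is well-defined in [−∞, +∞] for every W ∈ D, and let V* ∈ D satisfy E[U(V*)] = sup_{W∈D} E[U(W)] < ∞. Then for every α > 0 and every W ∈ D with W ≥ α almost surely: V* > 0 almost surely, the random variable (W − V*)⁻ U'(V*) is integrable, and E[(W − V*)⁺ U'(V*)] ≤ E[(W − V*)⁻ U'(V*)]; that is, E[(W − V*) U'(V*)] ≤ 0. -/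

import Mathlib

open MeasureTheory Set Filter Topology ENNReal

/-- The positive part of an extended real number, as an element of `ℝ≥0∞`. -/
noncomputable def erealPosPart (x : EReal) : ℝ≥0∞ :=
  if x = ⊤ then ⊤ else ENNReal.ofReal x.toReal

/-- The utility function `U : (0,∞) → ℝ` extended to `0` by the (possibly infinite)
value `U₀ ∈ [−∞, ∞)`. -/
noncomputable def utilAt (U : ℝ → ℝ) (U₀ : EReal) (x : ℝ) : EReal :=
  if x = 0 then U₀ else (U x : EReal)

/-- The expected utility `E[U(W)] ∈ [−∞, +∞]` of a nonnegative random variable `W`,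
defined as the difference of the integrals of the positive and negative parts. -/
noncomputable def expUtil {Ω : Type*} [MeasurableSpace Ω] (P : Measure Ω)
    (U : ℝ → ℝ) (U₀ : EReal) (W : Ω → ℝ) : EReal :=
  ((∫⁻ ω, erealPosPart (utilAt U U₀ (W ω)) ∂P : ℝ≥0∞) : EReal)
    - ((∫⁻ ω, erealPosPart (-(utilAt U U₀ (W ω))) ∂P : ℝ≥0∞) : EReal)

/-- `E[U(W)]` is well-defined in `[−∞, +∞]`: the positive part or the negative part of
`U(W)` has finite integral. -/
def ExpUtilWellDef {Ω : Type*} [MeasurableSpace Ω] (P : Measure Ω)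
    (U : ℝ → ℝ) (U₀ : EReal) (W : Ω → ℝ) : Prop :=
  (∫⁻ ω, erealPosPart (utilAt U U₀ (W ω)) ∂P) ≠ ⊤
    ∨ (∫⁻ ω, erealPosPart (-(utilAt U U₀ (W ω))) ∂P) ≠ ⊤

/-!
For `ε ∈ (0, 1]` the random variable `V_ε = V* + ε (W - V*)` lies in `D`, so optimality of `V*`
gives `E[q_ε⁺] ≤ E[q_ε⁻]` for the difference quotients `q_ε = (U(V_ε) - U(V*)) / ε`. Concavity
bounds `q_ε` from below by `U(W) - U(V*) ≥ U(α) - U(V*)`, which is integrable, so dominated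
convergence applies to the negative parts and Fatou's lemma to the positive parts. As `ε ↓ 0`,
`q_ε` tends to `(W - V*) U'(V*)` where `V* > 0`, and to `+∞` where `V* = 0` by the Inada condition
at `0`; finiteness of the Fatou bound therefore forces `V* > 0` a.s. and gives the inequality.
-/

noncomputable def erealIntegral {Ω : Type*} [MeasurableSpace Ω] (P : Measure Ω)
    (v : Ω → EReal) : EReal :=
  ((∫⁻ ω, erealPosPart (v ω) ∂P : ℝ≥0∞) : EReal) - ((∫⁻ ω, erealPosPart (-v ω) ∂P : ℝ≥0∞) : EReal)

section ERealIntegral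

variable {Ω : Type*} [MeasurableSpace Ω] {P : Measure Ω}

lemma expUtil_eq_erealIntegral (U : ℝ → ℝ) (U₀ : EReal) (X : Ω → ℝ) :
    expUtil P U U₀ X = erealIntegral P fun ω => utilAt U U₀ (X ω) := rfl

@[simp] lemma erealPosPart_coe (r : ℝ) : erealPosPart r = ENNReal.ofReal r := by
  simp [erealPosPart]

lemma erealPosPart_mono : Monotone erealPosPart := by
  intro x y h
  induction y using EReal.rec with
  | top => simp [erealPosPart]
  | bot => simp [le_bot_iff.1 h, erealPosPart]
  | coe b =>
    induction x using EReal.rec with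
    | top => simp at h
    | bot => simp [erealPosPart]
    | coe a => simpa using ENNReal.ofReal_le_ofReal (EReal.coe_le_coe_iff.1 h)

lemma erealIntegral_mono {v w : Ω → EReal} (h : v ≤ᵐ[P] w) :
    erealIntegral P v ≤ erealIntegral P w :=
  EReal.sub_le_sub
    (EReal.coe_ennreal_le_coe_ennreal_iff.2 <| lintegral_mono_ae <|
      h.mono fun _ hω => erealPosPart_mono hω)
    (EReal.coe_ennreal_le_coe_ennreal_iff.2 <| lintegral_mono_ae <|
      h.mono fun _ hω => erealPosPart_mono (EReal.neg_le_neg_iff.2 hω))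

lemma erealIntegral_congr_ae {v w : Ω → EReal} (h : v =ᵐ[P] w) :
    erealIntegral P v = erealIntegral P w :=
  (erealIntegral_mono h.le).antisymm (erealIntegral_mono h.symm.le)

lemma erealIntegral_coe (f : Ω → ℝ) :
    erealIntegral P (fun ω => (f ω : EReal)) =
      ((∫⁻ ω, ENNReal.ofReal (f ω) ∂P : ℝ≥0∞) : EReal)
        - ((∫⁻ ω, ENNReal.ofReal (-f ω) ∂P : ℝ≥0∞) : EReal) := by
  simp only [erealIntegral, ← EReal.coe_neg, erealPosPart_coe]

lemma erealIntegral_coe_of_integrable {f : Ω → ℝ} (hf : Integrable f P) :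
    erealIntegral P (fun ω => (f ω : EReal)) = ∫ ω, f ω ∂P := by
  have hneg : ∫⁻ ω, ENNReal.ofReal (-f ω) ∂P ≠ ⊤ := hf.neg.lintegral_lt_top.ne
  rw [erealIntegral_coe, integral_eq_lintegral_pos_part_sub_lintegral_neg_part hf, EReal.coe_sub,
    EReal.coe_ennreal_toReal hf.lintegral_lt_top.ne,
    EReal.coe_ennreal_toReal hneg]

lemma erealIntegral_coe_ne_bot {f : Ω → ℝ} (hf : ∫⁻ ω, ENNReal.ofReal (-f ω) ∂P ≠ ⊤) :
    erealIntegral P (fun ω => (f ω : EReal)) ≠ ⊥ := by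
  rw [erealIntegral_coe, ← EReal.coe_ennreal_toReal hf]
  refine ne_bot_of_le_ne_bot (EReal.coe_ne_bot (0 - (∫⁻ ω, ENNReal.ofReal (-f ω) ∂P).toReal)) ?_
  rw [EReal.coe_sub]
  exact EReal.sub_le_sub (EReal.coe_ennreal_nonneg _) le_rfl

lemma integrable_of_lintegral_ofReal_ne_top {f : Ω → ℝ} (hf : AEStronglyMeasurable f P)
    (hpos : ∫⁻ ω, ENNReal.ofReal (f ω) ∂P ≠ ⊤) (hneg : ∫⁻ ω, ENNReal.ofReal (-f ω) ∂P ≠ ⊤) :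
    Integrable f P := by
  refine ((integrable_toReal_of_lintegral_ne_top hf.aemeasurable.ennreal_ofReal hpos).sub
    (integrable_toReal_of_lintegral_ne_top hf.aemeasurable.neg.ennreal_ofReal hneg)).congr
    (Eventually.of_forall fun ω => ?_)
  simp only [Pi.sub_apply, Pi.neg_apply, ENNReal.toReal_ofReal', max_zero_sub_max_neg_zero_eq_self]

lemma integrable_of_erealIntegral_coe_ne_bot_ne_top {f : Ω → ℝ} (hf : AEStronglyMeasurable f P)
    (hbot : erealIntegral P (fun ω => (f ω : EReal)) ≠ ⊥)
    (htop : erealIntegral P (fun ω => (f ω : EReal)) ≠ ⊤) : Integrable f P := by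
  rw [erealIntegral_coe] at hbot htop
  have hneg : ∫⁻ ω, ENNReal.ofReal (-f ω) ∂P ≠ ⊤ := fun h => hbot (by simp [h])
  refine integrable_of_lintegral_ofReal_ne_top hf (fun h => htop ?_) hneg
  rw [h, ← EReal.coe_ennreal_toReal hneg]
  exact EReal.top_sub_coe _

lemma measure_eq_zero_of_erealIntegral_ne_bot {v : Ω → EReal} {s : Set Ω} (hs : MeasurableSet s)
    (hv : ∀ ω ∈ s, v ω = ⊥) (h : erealIntegral P v ≠ ⊥) : P s = 0 := by
  have hneg : ∫⁻ ω, erealPosPart (-v ω) ∂P ≠ ⊤ := fun h' => h (by simp [erealIntegral, h'])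
  have hle : ⊤ * P s ≤ ∫⁻ ω, erealPosPart (-v ω) ∂P := by
    rw [← lintegral_indicator_const hs]
    refine lintegral_mono fun ω => ?_
    by_cases hω : ω ∈ s
    · simp [hω, hv ω hω, erealPosPart]
    · simp [hω]
  by_contra hs0
  exact hneg (top_le_iff.1 (by simpa [ENNReal.top_mul hs0] using hle))

lemma lintegral_ofReal_le_of_erealIntegral_add_le {u g : Ω → ℝ} (hu : Integrable u P)
    (hg : AEStronglyMeasurable g P)
    (h : erealIntegral P (fun ω => ((u ω + g ω : ℝ) : EReal)) ≤ ∫ ω, u ω ∂P) :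
    ∫⁻ ω, ENNReal.ofReal (g ω) ∂P ≤ ∫⁻ ω, ENNReal.ofReal (-g ω) ∂P := by
  by_cases hneg : ∫⁻ ω, ENNReal.ofReal (-g ω) ∂P = ⊤
  · simp [hneg]
  have hneg' : ∫⁻ ω, ENNReal.ofReal (-(u ω + g ω)) ∂P ≠ ⊤ := by
    refine ne_top_of_le_ne_top (ENNReal.add_ne_top.2 ⟨hu.neg.lintegral_lt_top.ne, hneg⟩)
      ((lintegral_mono fun ω => ?_).trans_eq
        (lintegral_add_left' hu.neg.aemeasurable.ennreal_ofReal _))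
    rw [neg_add]
    exact ENNReal.ofReal_add_le
  have hug : Integrable (fun ω => u ω + g ω) P :=
    integrable_of_erealIntegral_coe_ne_bot_ne_top (hu.1.add hg) (erealIntegral_coe_ne_bot hneg')
      (ne_top_of_le_ne_top (EReal.coe_ne_top _) h)
  have hgi : Integrable g P := (hug.sub hu).congr (Eventually.of_forall fun ω => by simp)
  rw [erealIntegral_coe_of_integrable hug, EReal.coe_le_coe_iff, integral_add hu hgi,
    add_le_iff_nonpos_right, integral_eq_lintegral_pos_part_sub_lintegral_neg_part hgi,
    sub_nonpos] at h
  exact (ENNReal.toReal_le_toReal hgi.lintegral_lt_top.ne hneg).1 h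

end ERealIntegral

lemma ConcaveOn.le_add_mul_sub_of_hasDerivAt {S : Set ℝ} {f : ℝ → ℝ} {f' x y : ℝ}
    (hf : ConcaveOn ℝ S f) (hx : x ∈ S) (hy : y ∈ S) (hd : HasDerivAt f f' x) :
    f y ≤ f x + f' * (y - x) := by
  rcases lt_trichotomy x y with hxy | rfl | hxy
  · have h := hf.slope_le_of_hasDerivAt hx hy hxy hd
    rw [slope_def_field, div_le_iff₀ (sub_pos.2 hxy)] at h
    linarith
  · simp
  · have h := hf.le_slope_of_hasDerivAt hy hx hxy hd
    rw [slope_def_field, le_div_iff₀ (sub_pos.2 hxy)] at h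
    linarith

/-- The real-valued form of `utilAt U c` for finite `c`; the two agree on `[0, ∞)`. -/
noncomputable def utilReal (U : ℝ → ℝ) (c : ℝ) : ℝ → ℝ := (Ioi 0).piecewise U fun _ => c

noncomputable def diffQuot (f : ℝ → ℝ) (v w ε : ℝ) : ℝ := (f (v + ε * (w - v)) - f v) / ε

lemma Measurable.diffQuot {Ω : Type*} [MeasurableSpace Ω] {f : ℝ → ℝ} {V W : Ω → ℝ}
    (hf : Measurable f) (hV : Measurable V) (hW : Measurable W) (ε : ℝ) :
    Measurable fun ω => diffQuot f (V ω) (W ω) ε :=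
  ((hf.comp (hV.add (measurable_const.mul (hW.sub hV)))).sub (hf.comp hV)).div_const ε

section Utility

variable {U U' : ℝ → ℝ} {U₀ : EReal} {c x : ℝ}

lemma utilReal_of_pos (hx : 0 < x) : utilReal U c x = U x :=
  piecewise_eq_of_mem _ _ _ hx

lemma utilReal_of_nonpos (hx : x ≤ 0) : utilReal U c x = c :=
  piecewise_eq_of_notMem _ _ _ (not_lt.2 hx)

lemma measurable_utilReal (hU : ContinuousOn U (Ioi 0)) (c : ℝ) : Measurable (utilReal U c) :=
  hU.measurable_piecewise continuousOn_const measurableSet_Ioi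

lemma utilAt_eq_coe_utilReal (hU₀ : U₀ ≠ ⊤) (hx : 0 ≤ x) (hbot : x = 0 → U₀ ≠ ⊥) :
    utilAt U U₀ x = utilReal U U₀.toReal x := by
  rcases hx.eq_or_lt with rfl | hx
  · rw [utilAt, if_pos rfl, utilReal_of_nonpos le_rfl, EReal.coe_toReal hU₀ (hbot rfl)]
  · rw [utilAt, if_neg hx.ne', utilReal_of_pos hx]

lemma one_div_add_one_mem_Ioc (n : ℕ) : 1 / ((n : ℝ) + 1) ∈ Ioc 0 1 :=
  ⟨by positivity, div_le_one_of_le₀ (by simp) (by positivity)⟩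

lemma tendsto_one_div_add_one_nhdsGT :
    Tendsto (fun n : ℕ => 1 / ((n : ℝ) + 1)) atTop (𝓝[>] 0) :=
  tendsto_nhdsWithin_iff.2
    ⟨tendsto_one_div_add_atTop_nhds_zero_nat, .of_forall fun n => (one_div_add_one_mem_Ioc n).1⟩

lemma add_mul_sub_pos {v w ε : ℝ} (hv : 0 ≤ v) (hw : 0 < w) (hε : ε ∈ Ioc 0 1) :
    0 < v + ε * (w - v) := by
  obtain ⟨hε0, hε1⟩ := hε
  nlinarith

lemma deriv_nonneg_of_monotoneOn (hderiv : ∀ x ∈ Ioi (0 : ℝ), HasDerivAt U (U' x) x)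
    (hconc : ConcaveOn ℝ (Ioi 0) U) (hmono : MonotoneOn U (Ioi 0)) (hx : 0 < x) : 0 ≤ U' x := by
  have hx1 : x + 1 ∈ Ioi (0 : ℝ) := mem_Ioi.2 (by linarith)
  have := hconc.le_add_mul_sub_of_hasDerivAt hx hx1 (hderiv x hx)
  have := hmono hx hx1 (by linarith)
  linarith

lemma mul_deriv_le_sub_of_tendsto (hderiv : ∀ x ∈ Ioi (0 : ℝ), HasDerivAt U (U' x) x)
    (hconc : ConcaveOn ℝ (Ioi 0) U) (hc : Tendsto U (𝓝[>] 0) (𝓝 c)) (hx : 0 < x) :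
    x * U' x ≤ U x - c := by
  have hlin : Tendsto (fun y => U x + U' x * (y - x)) (𝓝[>] 0) (𝓝 (U x + U' x * (0 - x))) :=
    ((continuous_const.add (continuous_const.mul (continuous_id.sub continuous_const))).tendsto
      0).mono_left nhdsWithin_le_nhds
  have := le_of_tendsto_of_tendsto hc hlin <| eventually_nhdsWithin_of_forall fun y hy =>
    hconc.le_add_mul_sub_of_hasDerivAt hx hy (hderiv x hx)
  linarith

lemma neg_diffQuot_utilReal_le (hderiv : ∀ x ∈ Ioi (0 : ℝ), HasDerivAt U (U' x) x)
    (hconc : ConcaveOn ℝ (Ioi 0) U) (hmono : MonotoneOn U (Ioi 0)) {α v w ε : ℝ}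
    (hv : 0 ≤ v) (hα : 0 < α) (hw : α ≤ w) (hε : ε ∈ Ioc 0 1)
    (hc : v = 0 → Tendsto U (𝓝[>] 0) (𝓝 c)) :
    -diffQuot (utilReal U c) v w ε ≤ max (utilReal U c v - U α) 0 := by
  have hw' := hα.trans_le hw
  have hpos := add_mul_sub_pos hv hw' hε
  obtain ⟨hε0, hε1⟩ := hε
  rw [diffQuot, utilReal_of_pos hpos]
  rcases hv.eq_or_lt with rfl | hv
  · have h := mul_deriv_le_sub_of_tendsto hderiv hconc (hc rfl) hpos
    have := mul_nonneg hpos.le (deriv_nonneg_of_monotoneOn hderiv hconc hmono hpos)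
    rw [utilReal_of_nonpos le_rfl]
    exact (neg_nonpos.2 (div_nonneg (by linarith) hε0.le)).trans (le_max_right _ _)
  · have hconv := hconc.2 hv hw' (by linarith : 0 ≤ 1 - ε) hε0.le (by ring)
    have hUw := hmono hα hw' hw
    simp only [smul_eq_mul, show (1 - ε) * v + ε * w = v + ε * (w - v) by ring] at hconv
    have hmax := le_max_left (U v - U α) 0
    rw [utilReal_of_pos hv, neg_le, le_div_iff₀ hε0]
    nlinarith

lemma tendsto_diffQuot_utilReal_of_pos (hderiv : ∀ x ∈ Ioi (0 : ℝ), HasDerivAt U (U' x) x)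
    {v w : ℝ} (hv : 0 < v) (hw : 0 < w) :
    Tendsto (diffQuot (utilReal U c) v w) (𝓝[>] 0) (𝓝 ((w - v) * U' v)) := by
  have hd : HasDerivAt (fun t => U (v + t * (w - v))) (U' v * (1 * (w - v))) 0 :=
    HasDerivAt.comp (x := 0) (h₂ := U) (by simpa using hderiv v hv)
      (((hasDerivAt_id 0).mul_const (w - v)).const_add v)
  have h := (hasDerivAt_iff_tendsto_slope_zero.1 hd).mono_left (nhdsGT_le_nhdsNE 0)
  rw [one_mul, mul_comm (U' v)] at h
  refine h.congr' ?_
  filter_upwards [Ioo_mem_nhdsGT (zero_lt_one' ℝ)] with t ⟨ht0, ht1⟩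
  have hpos := add_mul_sub_pos hv.le hw ⟨ht0, ht1.le⟩
  simp only [diffQuot, zero_add, zero_mul, add_zero, smul_eq_mul, utilReal_of_pos hpos,
    utilReal_of_pos hv, inv_mul_eq_div]

lemma tendsto_diffQuot_utilReal_zero (hderiv : ∀ x ∈ Ioi (0 : ℝ), HasDerivAt U (U' x) x)
    (hconc : ConcaveOn ℝ (Ioi 0) U) (hInada : Tendsto U' (𝓝[>] 0) atTop)
    (hc : Tendsto U (𝓝[>] 0) (𝓝 c)) {w : ℝ} (hw : 0 < w) :
    Tendsto (diffQuot (utilReal U c) 0 w) (𝓝[>] 0) atTop := by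
  have hlin : Tendsto (fun ε => ε * w) (𝓝[>] 0) (𝓝[>] 0) := by
    refine tendsto_nhdsWithin_of_tendsto_nhds_of_eventually_within _ ?_
      (eventually_nhdsWithin_of_forall fun ε (hε : 0 < ε) => mul_pos hε hw)
    simpa using ((continuous_mul_const w).tendsto 0).mono_left nhdsWithin_le_nhds
  refine tendsto_atTop_mono' _ (eventually_nhdsWithin_of_forall fun ε (hε : 0 < ε) => ?_)
    ((hInada.comp hlin).const_mul_atTop hw)
  have h := mul_deriv_le_sub_of_tendsto hderiv hconc hc (mul_pos hε hw)
  rw [Function.comp_apply, diffQuot, zero_add, sub_zero, utilReal_of_pos (mul_pos hε hw),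
    utilReal_of_nonpos le_rfl, le_div_iff₀ hε]
  linarith

end Utility

section FirstOrder

variable {Ω : Type*} [MeasurableSpace Ω] {P : Measure Ω}

lemma lintegral_ofReal_le_of_const_mul {g : Ω → ℝ} {ε : ℝ} (hε : 0 < ε)
    (h : ∫⁻ ω, ENNReal.ofReal (ε * g ω) ∂P ≤ ∫⁻ ω, ENNReal.ofReal (-(ε * g ω)) ∂P) :
    ∫⁻ ω, ENNReal.ofReal (g ω) ∂P ≤ ∫⁻ ω, ENNReal.ofReal (-g ω) ∂P := by
  simp_rw [← mul_neg, ENNReal.ofReal_mul hε.le] at h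
  rwa [lintegral_const_mul' _ _ ENNReal.ofReal_ne_top,
    lintegral_const_mul' _ _ ENNReal.ofReal_ne_top,
    ENNReal.mul_le_mul_iff_right (ENNReal.ofReal_pos.2 hε).ne' ENNReal.ofReal_ne_top] at h

lemma lintegral_le_of_tendsto_of_dominated {f g : ℕ → Ω → ℝ≥0∞} {F G h : Ω → ℝ≥0∞}
    (hf : ∀ n, AEMeasurable (f n) P) (hg : ∀ n, AEMeasurable (g n) P)
    (hfg : ∀ n, ∫⁻ ω, f n ω ∂P ≤ ∫⁻ ω, g n ω ∂P)
    (hF : ∀ᵐ ω ∂P, Tendsto (fun n => f n ω) atTop (𝓝 (F ω)))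
    (hG : ∀ᵐ ω ∂P, Tendsto (fun n => g n ω) atTop (𝓝 (G ω)))
    (hgh : ∀ n, g n ≤ᵐ[P] h) (hh : ∫⁻ ω, h ω ∂P ≠ ⊤) :
    ∫⁻ ω, F ω ∂P ≤ ∫⁻ ω, G ω ∂P :=
  calc ∫⁻ ω, F ω ∂P = ∫⁻ ω, liminf (fun n => f n ω) atTop ∂P :=
        lintegral_congr_ae (hF.mono fun _ hω => hω.liminf_eq.symm)
    _ ≤ liminf (fun n => ∫⁻ ω, f n ω ∂P) atTop := lintegral_liminf_le' hf
    _ ≤ liminf (fun n => ∫⁻ ω, g n ω ∂P) atTop := liminf_le_liminf (Eventually.of_forall hfg)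
    _ = ∫⁻ ω, G ω ∂P := (tendsto_lintegral_of_dominated_convergence' h hg hgh hh hG).liminf_eq

lemma tendsto_ofReal_max_mul {ι : Type*} {l : Filter ι} {q : ι → ℝ} {x d : ℝ} (hd : 0 ≤ d)
    (hq : Tendsto q l (𝓝 (x * d))) :
    Tendsto (fun i => ENNReal.ofReal (q i)) l (𝓝 (ENNReal.ofReal (max x 0 * d))) := by
  have hx : ENNReal.ofReal (x * d) = ENNReal.ofReal (max x 0 * d) := by
    rcases le_total x 0 with hx | hx
    · rw [max_eq_right hx, zero_mul, ENNReal.ofReal_zero,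
        ENNReal.ofReal_of_nonpos (mul_nonpos_of_nonpos_of_nonneg hx hd)]
    · rw [max_eq_left hx]
  exact hx ▸ (ENNReal.continuous_ofReal.tendsto _).comp hq

lemma tendsto_ofReal_neg_of_tendsto_atTop {ι : Type*} {l : Filter ι} {q : ι → ℝ}
    (hq : Tendsto q l atTop) : Tendsto (fun i => ENNReal.ofReal (-q i)) l (𝓝 0) := by
  refine tendsto_const_nhds.congr' ?_
  filter_upwards [hq.eventually_ge_atTop 0] with i hi
  exact (ENNReal.ofReal_of_nonpos (neg_nonpos.2 hi)).symm

lemma tendsto_ofReal_pos_part_and_neg_part {q : ℕ → ℝ} {v w d : ℝ}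
    (hpos : 0 < v → 0 ≤ d ∧ Tendsto q atTop (𝓝 ((w - v) * d)))
    (hzero : v ≤ 0 → Tendsto q atTop atTop) :
    Tendsto (fun n => ENNReal.ofReal (q n)) atTop
        (𝓝 (if 0 < v then ENNReal.ofReal (max (w - v) 0 * d) else ⊤)) ∧
      Tendsto (fun n => ENNReal.ofReal (-q n)) atTop
        (𝓝 (if 0 < v then ENNReal.ofReal (max (v - w) 0 * d) else 0)) := by
  by_cases hv : 0 < v
  · obtain ⟨hd, hq⟩ := hpos hv
    simp only [if_pos hv]
    refine ⟨tendsto_ofReal_max_mul hd hq, tendsto_ofReal_max_mul hd ?_⟩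
    rw [← neg_sub w v, neg_mul]
    exact hq.neg
  · have hq := hzero (not_lt.1 hv)
    simp only [if_neg hv]
    exact ⟨ENNReal.tendsto_ofReal_atTop.comp hq, tendsto_ofReal_neg_of_tendsto_atTop hq⟩

lemma first_order_condition_of_tendsto {q : ℕ → Ω → ℝ} {v w d φ : Ω → ℝ}
    (hqm : ∀ n, AEMeasurable (q n) P)
    (hq : ∀ n, ∫⁻ ω, ENNReal.ofReal (q n ω) ∂P ≤ ∫⁻ ω, ENNReal.ofReal (-q n ω) ∂P)
    (hφ : Integrable φ P) (hqφ : ∀ n, ∀ᵐ ω ∂P, -q n ω ≤ φ ω)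
    (hpos : ∀ᵐ ω ∂P, 0 < v ω →
      0 ≤ d ω ∧ Tendsto (fun n => q n ω) atTop (𝓝 ((w ω - v ω) * d ω)))
    (hzero : ∀ᵐ ω ∂P, v ω ≤ 0 → Tendsto (fun n => q n ω) atTop atTop) :
    (∀ᵐ ω ∂P, 0 < v ω) ∧ Integrable (fun ω => max (v ω - w ω) 0 * d ω) P ∧
      ∫⁻ ω, ENNReal.ofReal (max (w ω - v ω) 0 * d ω) ∂P
        ≤ ∫⁻ ω, ENNReal.ofReal (max (v ω - w ω) 0 * d ω) ∂P := by
  set F : Ω → ℝ≥0∞ := fun ω =>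
    if 0 < v ω then ENNReal.ofReal (max (w ω - v ω) 0 * d ω) else ⊤
  set G : Ω → ℝ≥0∞ := fun ω =>
    if 0 < v ω then ENNReal.ofReal (max (v ω - w ω) 0 * d ω) else 0
  have hlim : ∀ᵐ ω ∂P, Tendsto (fun n => ENNReal.ofReal (q n ω)) atTop (𝓝 (F ω)) ∧
      Tendsto (fun n => ENNReal.ofReal (-q n ω)) atTop (𝓝 (G ω)) :=
    hpos.and hzero |>.mono fun _ h => tendsto_ofReal_pos_part_and_neg_part h.1 h.2
  have hGφ : ∀ n, (fun ω => ENNReal.ofReal (-q n ω)) ≤ᵐ[P] fun ω => ENNReal.ofReal (φ ω) :=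
    fun n => (hqφ n).mono fun _ hω => ENNReal.ofReal_le_ofReal hω
  have hGfin : ∫⁻ ω, G ω ∂P ≠ ⊤ := by
    refine ne_top_of_le_ne_top hφ.lintegral_lt_top.ne (lintegral_mono_ae ?_)
    filter_upwards [hlim, ae_all_iff.2 hGφ] with ω hω hb
    exact le_of_tendsto' hω.2 hb
  have hFG : ∫⁻ ω, F ω ∂P ≤ ∫⁻ ω, G ω ∂P :=
    lintegral_le_of_tendsto_of_dominated (fun n => (hqm n).ennreal_ofReal)
      (fun n => (hqm n).neg.ennreal_ofReal) hq (hlim.mono fun _ h => h.1)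
      (hlim.mono fun _ h => h.2) hGφ hφ.lintegral_lt_top.ne
  -- `F = ⊤` where `v ≤ 0`, and `∫⁻ F` is finite.
  have hv : ∀ᵐ ω ∂P, 0 < v ω := by
    have hFm := aemeasurable_of_tendsto_metrizable_ae' (fun n => (hqm n).ennreal_ofReal)
      (hlim.mono fun _ h => h.1)
    filter_upwards [ae_lt_top' hFm (ne_top_of_le_ne_top hGfin hFG)] with ω hω
    by_contra hv
    simp [F, hv] at hω
  have hFeq : F =ᵐ[P] fun ω => ENNReal.ofReal (max (w ω - v ω) 0 * d ω) :=
    hv.mono fun _ hω => if_pos hω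
  have hGeq : G =ᵐ[P] fun ω => ENNReal.ofReal (max (v ω - w ω) 0 * d ω) :=
    hv.mono fun _ hω => if_pos hω
  refine ⟨hv, ?_, by rwa [lintegral_congr_ae hFeq, lintegral_congr_ae hGeq] at hFG⟩
  have hGm := aemeasurable_of_tendsto_metrizable_ae' (fun n => (hqm n).neg.ennreal_ofReal)
    (hlim.mono fun _ h => h.2)
  refine (integrable_toReal_of_lintegral_ne_top hGm hGfin).congr ?_
  filter_upwards [hGeq, hpos, hv] with ω hGω hp hvω
  rw [hGω, ENNReal.toReal_ofReal (mul_nonneg (le_max_right _ _) (hp hvω).1)]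

end FirstOrder

section ExpectedUtility

variable {Ω : Type*} [MeasurableSpace Ω] {P : Measure Ω} {U : ℝ → ℝ} {U₀ : EReal}

lemma expUtil_ne_bot_of_ae_le [IsFiniteMeasure P] (hmono : MonotoneOn U (Ioi 0)) {α : ℝ}
    (hα : 0 < α) {W : Ω → ℝ} (hW : ∀ᵐ ω ∂P, α ≤ W ω) : expUtil P U U₀ W ≠ ⊥ := by
  refine ne_bot_of_le_ne_bot (EReal.coe_ne_bot (∫ _, U α ∂P)) ?_
  rw [← erealIntegral_coe_of_integrable (integrable_const (U α)), expUtil_eq_erealIntegral]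
  refine erealIntegral_mono (hW.mono fun ω hω => ?_)
  have hWpos := hα.trans_le hω
  simp only [utilAt, if_neg hWpos.ne']
  exact EReal.coe_le_coe_iff.2 (hmono hα hWpos hω)

lemma ae_ne_zero_of_expUtil_bot_ne_bot {X : Ω → ℝ} (hX : Measurable X)
    (h : expUtil P U ⊥ X ≠ ⊥) : ∀ᵐ ω ∂P, X ω ≠ 0 :=
  measure_eq_zero_iff_ae_notMem.1 <| measure_eq_zero_of_erealIntegral_ne_bot
    (hX (measurableSet_singleton 0)) (fun ω hω => by simp [utilAt, show X ω = 0 from hω]) h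

lemma ae_utilAt_eq_coe_utilReal (hU₀ : U₀ ≠ ⊤) {X : Ω → ℝ} (hXm : Measurable X)
    (hX0 : ∀ ω, 0 ≤ X ω) (h : expUtil P U U₀ X ≠ ⊥) :
    ∀ᵐ ω ∂P, utilAt U U₀ (X ω) = utilReal U U₀.toReal (X ω) := by
  have hbot : ∀ᵐ ω ∂P, X ω = 0 → U₀ ≠ ⊥ := by
    rcases eq_or_ne U₀ ⊥ with rfl | hne
    · exact (ae_ne_zero_of_expUtil_bot_ne_bot hXm h).mono fun ω hω h0 => absurd h0 hω
    · exact Eventually.of_forall fun _ _ => hne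
  exact hbot.mono fun ω hω => utilAt_eq_coe_utilReal hU₀ (hX0 ω) hω

lemma integrable_utilReal_of_expUtil_ne_bot_ne_top (hU : ContinuousOn U (Ioi 0)) (hU₀ : U₀ ≠ ⊤)
    {X : Ω → ℝ} (hXm : Measurable X) (hX0 : ∀ ω, 0 ≤ X ω) (hbot : expUtil P U U₀ X ≠ ⊥)
    (htop : expUtil P U U₀ X ≠ ⊤) :
    Integrable (fun ω => utilReal U U₀.toReal (X ω)) P ∧
      expUtil P U U₀ X = ∫ ω, utilReal U U₀.toReal (X ω) ∂P := by
  have hX := (expUtil_eq_erealIntegral U U₀ X).trans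
    (erealIntegral_congr_ae (ae_utilAt_eq_coe_utilReal hU₀ hXm hX0 hbot))
  have hu := integrable_of_erealIntegral_coe_ne_bot_ne_top
    ((measurable_utilReal hU _).comp hXm).aestronglyMeasurable (hX ▸ hbot) (hX ▸ htop)
  exact ⟨hu, hX.trans (erealIntegral_coe_of_integrable hu)⟩

lemma ae_tendsto_nhdsGT_of_expUtil_ne_bot
    (hU₀ : Tendsto (fun x : ℝ => (U x : EReal)) (𝓝[>] 0) (𝓝 U₀)) (hU₀ne : U₀ ≠ ⊤)
    {X : Ω → ℝ} (hXm : Measurable X) (hX0 : ∀ ω, 0 ≤ X ω) (h : expUtil P U U₀ X ≠ ⊥) :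
    ∀ᵐ ω ∂P, X ω = 0 → Tendsto U (𝓝[>] 0) (𝓝 U₀.toReal) := by
  filter_upwards [ae_utilAt_eq_coe_utilReal hU₀ne hXm hX0 h] with ω hω h0
  rw [h0, utilAt, if_pos rfl, utilReal_of_nonpos le_rfl] at hω
  exact EReal.tendsto_coe.1 (hω ▸ hU₀)

lemma lintegral_ofReal_diffQuot_le_of_expUtil_le {c ε : ℝ} {V W : Ω → ℝ}
    (hUm : Measurable (utilReal U c)) (hVm : Measurable V) (hWm : Measurable W)
    (hV0 : ∀ ω, 0 ≤ V ω) (hW0 : ∀ᵐ ω ∂P, 0 < W ω) (hε : ε ∈ Ioc 0 1)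
    (hu : Integrable (fun ω => utilReal U c (V ω)) P)
    (hV : expUtil P U U₀ V = ∫ ω, utilReal U c (V ω) ∂P)
    (hle : expUtil P U U₀ (V + ε • (W - V)) ≤ expUtil P U U₀ V) :
    ∫⁻ ω, ENNReal.ofReal (diffQuot (utilReal U c) (V ω) (W ω) ε) ∂P
      ≤ ∫⁻ ω, ENNReal.ofReal (-diffQuot (utilReal U c) (V ω) (W ω) ε) ∂P := by
  refine lintegral_ofReal_le_of_const_mul hε.1
    (lintegral_ofReal_le_of_erealIntegral_add_le hu ?_ ?_)
  · exact (measurable_const.mul (hUm.diffQuot hVm hWm ε)).aestronglyMeasurable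
  refine (le_of_eq (erealIntegral_congr_ae ?_)).trans (hV ▸ hle)
  filter_upwards [hW0] with ω hω
  have hpos := add_mul_sub_pos (hV0 ω) hω hε
  simp only [Pi.add_apply, Pi.smul_apply, Pi.sub_apply, smul_eq_mul, utilAt, if_neg hpos.ne',
    diffQuot, mul_div_cancel₀ _ hε.1.ne', add_sub_cancel, utilReal_of_pos hpos]

end ExpectedUtility

theorem first_order_condition_at_optimum_general
    {Ω : Type*} [MeasurableSpace Ω] (P : Measure Ω) [IsProbabilityMeasure P]
    (U U' : ℝ → ℝ) (U₀ : EReal)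
    (hderiv : ∀ x ∈ Set.Ioi (0 : ℝ), HasDerivAt U (U' x) x)
    (hmono : StrictMonoOn U (Set.Ioi 0))
    (hconc : StrictConcaveOn ℝ (Set.Ioi 0) U)
    (hInada₀ : Tendsto U' (nhdsWithin 0 (Set.Ioi 0)) atTop)
    (hU₀ : Tendsto (fun x : ℝ => (U x : EReal)) (nhdsWithin 0 (Set.Ioi 0)) (nhds U₀))
    (hU₀ne : U₀ ≠ ⊤)
    (D : Set (Ω → ℝ)) (hD : Convex ℝ D)
    (hDmeas : ∀ W ∈ D, Measurable W) (hDnonneg : ∀ W ∈ D, ∀ ω, 0 ≤ W ω)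
    (Vstar : Ω → ℝ) (hVD : Vstar ∈ D)
    (hopt : expUtil P U U₀ Vstar = ⨆ W ∈ D, expUtil P U U₀ W)
    (hfin : expUtil P U U₀ Vstar ≠ ⊤) :
    ∀ α : ℝ, 0 < α → ∀ W ∈ D, (∀ᵐ ω ∂P, α ≤ W ω) →
      (∀ᵐ ω ∂P, 0 < Vstar ω) ∧
      Integrable (fun ω => max (Vstar ω - W ω) 0 * U' (Vstar ω)) P ∧
      ∫⁻ ω, ENNReal.ofReal (max (W ω - Vstar ω) 0 * U' (Vstar ω)) ∂P
        ≤ ∫⁻ ω, ENNReal.ofReal (max (Vstar ω - W ω) 0 * U' (Vstar ω)) ∂P := by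
  intro α hα W hW hWα
  have hUcont : ContinuousOn U (Ioi 0) := fun x hx => (hderiv x hx).continuousAt.continuousWithinAt
  have hle : ∀ X ∈ D, expUtil P U U₀ X ≤ expUtil P U U₀ Vstar :=
    fun X hX => hopt ▸ le_iSup₂ (f := fun X _ => expUtil P U U₀ X) X hX
  have hbot := ne_bot_of_le_ne_bot (expUtil_ne_bot_of_ae_le hmono.monotoneOn hα hWα) (hle W hW)
  obtain ⟨hu, hVu⟩ := integrable_utilReal_of_expUtil_ne_bot_ne_top hUcont hU₀ne (hDmeas _ hVD)
    (hDnonneg _ hVD) hbot hfin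
  have hc := ae_tendsto_nhdsGT_of_expUtil_ne_bot hU₀ hU₀ne (hDmeas _ hVD) (hDnonneg _ hVD) hbot
  have hε := one_div_add_one_mem_Ioc
  have hεlim := tendsto_one_div_add_one_nhdsGT
  refine first_order_condition_of_tendsto
    (q := fun n ω => diffQuot (utilReal U U₀.toReal) (Vstar ω) (W ω) (1 / ((n : ℝ) + 1)))
    (fun n => ?_) (fun n => ?_) (hu.sub (integrable_const (U α))).pos_part (fun n => ?_) ?_ ?_
  · exact ((measurable_utilReal hUcont _).diffQuot (hDmeas _ hVD) (hDmeas _ hW) _).aemeasurable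
  · exact lintegral_ofReal_diffQuot_le_of_expUtil_le (measurable_utilReal hUcont _) (hDmeas _ hVD)
      (hDmeas _ hW) (hDnonneg _ hVD) (hWα.mono fun _ h => hα.trans_le h) (hε n) hu hVu
      (hle _ (hD.add_smul_sub_mem hVD hW (Ioc_subset_Icc_self (hε n))))
  · filter_upwards [hWα, hc] with ω hω hcω using neg_diffQuot_utilReal_le hderiv hconc.concaveOn
      hmono.monotoneOn (hDnonneg _ hVD ω) hα hω (hε n) hcω
  · filter_upwards [hWα] with ω hω hv using
      ⟨deriv_nonneg_of_monotoneOn hderiv hconc.concaveOn hmono.monotoneOn hv,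
        (tendsto_diffQuot_utilReal_of_pos hderiv hv (hα.trans_le hω)).comp hεlim⟩
  · filter_upwards [hWα, hc] with ω hω hcω hv
    have h0 := le_antisymm hv (hDnonneg _ hVD ω)
    simp only [h0]
    exact (tendsto_diffQuot_utilReal_zero hderiv hconc.concaveOn hInada₀ (hcω h0)
      (hα.trans_le hω)).comp hεlim

/-- Let `U : (0,∞) → ℝ` be continuously differentiable, strictly
increasing and strictly concave, with `U'(0+) = +∞`, `U'(∞) = 0` and
`limsup_{x→∞} x U'(x)/U(x) < 1`; extend `U` to `0` by `U(0) = lim_{x↓0} U(x) ∈ [−∞, ∞)`.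
Let `D` be a convex set of nonnegative random variables with well-defined expected
utilities and let `V* ∈ D` satisfy `E[U(V*)] = sup_{W ∈ D} E[U(W)] < ∞`. Then for every
`α > 0` and every `W ∈ D` with `W ≥ α` a.s.: `V* > 0` a.s., `(W − V*)⁻ U'(V*)` is
integrable, and `E[(W − V*)⁺ U'(V*)] ≤ E[(W − V*)⁻ U'(V*)]`,
i.e. `E[(W − V*) U'(V*)] ≤ 0`. -/
theorem first_order_condition_at_optimum
    {Ω : Type*} [MeasurableSpace Ω] (P : Measure Ω) [IsProbabilityMeasure P]
    (U U' : ℝ → ℝ) (U₀ : EReal)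
    (hderiv : ∀ x ∈ Set.Ioi (0 : ℝ), HasDerivAt U (U' x) x)
    (hU'cont : ContinuousOn U' (Set.Ioi 0))
    (hmono : StrictMonoOn U (Set.Ioi 0))
    (hconc : StrictConcaveOn ℝ (Set.Ioi 0) U)
    (hInada₀ : Tendsto U' (nhdsWithin 0 (Set.Ioi 0)) atTop)
    (hInadaTop : Tendsto U' atTop (nhds 0))
    (hRAE : Filter.limsup (fun x : ℝ => x * U' x / U x) atTop < 1)
    (hU₀ : Tendsto (fun x : ℝ => (U x : EReal)) (nhdsWithin 0 (Set.Ioi 0)) (nhds U₀))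
    (hU₀ne : U₀ ≠ ⊤)
    (D : Set (Ω → ℝ)) (hD : Convex ℝ D)
    (hDmeas : ∀ W ∈ D, Measurable W) (hDnonneg : ∀ W ∈ D, ∀ ω, 0 ≤ W ω)
    (hDwd : ∀ W ∈ D, ExpUtilWellDef P U U₀ W)
    (Vstar : Ω → ℝ) (hVD : Vstar ∈ D)
    (hopt : expUtil P U U₀ Vstar = ⨆ W ∈ D, expUtil P U U₀ W)
    (hfin : expUtil P U U₀ Vstar ≠ ⊤) :
    ∀ α : ℝ, 0 < α → ∀ W ∈ D, (∀ᵐ ω ∂P, α ≤ W ω) →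
      (∀ᵐ ω ∂P, 0 < Vstar ω) ∧
      Integrable (fun ω => max (Vstar ω - W ω) 0 * U' (Vstar ω)) P ∧
      ∫⁻ ω, ENNReal.ofReal (max (W ω - Vstar ω) 0 * U' (Vstar ω)) ∂P
        ≤ ∫⁻ ω, ENNReal.ofReal (max (Vstar ω - W ω) 0 * U' (Vstar ω)) ∂P :=
  first_order_condition_at_optimum_general P U U' U₀ hderiv hmono hconc hInada₀ hU₀ hU₀ne D hD
    hDmeas hDnonneg Vstar hVD hopt hfin
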